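/- arXiv:2602.16283 — 8 statements merged into one kernel-verified Lean document; each statement's English description precedes it below -/
import Mathlib

section
/- Let μ ∈ ℝ, σ > 0, and let k, n be natural numbers. Then ∫_ℝ ((x−μ)/σ)^n · exp(−k·(x−μ)/σ) · f(x;μ,σ) dx = (−1)^n · Γ^{(n)}(k+1), where Γ^{(n)} denotes the n-th derivative of the real Gamma function. -/
/-!
Substituting `u = (x - μ)/σ` and then `t = exp (-u)` turns the left side into
`(-1)^n ∫_{t > 0} t^k (log t)^n e^{-t} dt`. On the other side `Γ(s) = ∫_{t > 0} t^{s-1} e^{-t} dt`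
is a Mellin transform, and differentiating it under the integral sign multiplies the integrand
by `log t`. This is legitimate at every order because `log t` is dominated by any power `t^{±ε}`
at `∞` and at `0`, so `Γ^{(n)}(s) = ∫_{t > 0} t^{s-1} (log t)^n e^{-t} dt` for `s > 0`.
-/

open MeasureTheory Real

/-- Gumbel(μ,σ) density. -/
noncomputable def gumbelPdf (μ σ x : ℝ) : ℝ :=
  (1 / σ) * Real.exp (-((x - μ) / σ)) * Real.exp (-Real.exp (-((x - μ) / σ)))

open Set Filter Asymptotics
open scoped Topology

lemma isBigO_log_pow_rpow_atTop (n : ℕ) {ε : ℝ} (hε : 0 < ε) :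
    (fun t : ℝ => log t ^ n) =O[atTop] (· ^ ε) := by
  simpa only [rpow_natCast] using (isLittleO_log_rpow_rpow_atTop (n : ℝ) hε).isBigO

lemma isBigO_log_pow_rpow_nhdsGT_zero (n : ℕ) {ε : ℝ} (hε : 0 < ε) :
    (fun t : ℝ => log t ^ n) =O[𝓝[>] 0] (· ^ (-ε)) := by
  rw [← isBigO_norm_left]
  simpa only [norm_pow, norm_eq_abs, rpow_natCast] using
    (isLittleO_abs_log_rpow_rpow_nhdsGT_zero (n : ℝ) (neg_lt_zero.2 hε)).isBigO

lemma eventuallyEq_rpow_mul_rpow {l : Filter ℝ} (hl : ∀ᶠ t in l, 0 < t) (a b : ℝ) :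
    (fun t : ℝ => t ^ a * t ^ b) =ᶠ[l] (· ^ (a + b)) :=
  hl.mono fun _ ht => (rpow_add ht a b).symm

lemma hasDerivAt_mellin_log_pow_smul {E : Type*} [NormedAddCommGroup E] [NormedSpace ℂ E]
    {f : ℝ → E} {a b : ℝ} {s : ℂ}
    (hfc : LocallyIntegrableOn f (Ioi 0)) (hf_top : f =O[atTop] (· ^ (-a)))
    (hs_top : s.re < a) (hf_bot : f =O[𝓝[>] 0] (· ^ (-b))) (hs_bot : b < s.re) (n : ℕ) :
    HasDerivAt (mellin fun t => log t ^ n • f t)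
      (mellin (fun t => log t ^ (n + 1) • f t) s) s := by
  have hε_top : 0 < (a - s.re) / 2 := by linarith
  have hε_bot : 0 < (s.re - b) / 2 := by linarith
  have hfc' : LocallyIntegrableOn (fun t => log t ^ n • f t) (Ioi 0) :=
    hfc.continuousOn_smul isOpen_Ioi.isLocallyClosed
      ((continuousOn_log.mono fun t ht => (mem_Ioi.1 ht).ne').pow n)
  have h_top : (fun t => log t ^ n • f t) =O[atTop] (· ^ (-(a - (a - s.re) / 2))) := by
    refine ((isBigO_log_pow_rpow_atTop n hε_top).smul hf_top).trans_eventuallyEq ?_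
    simpa only [smul_eq_mul, ← sub_eq_add_neg, neg_sub] using
      eventuallyEq_rpow_mul_rpow (eventually_gt_atTop 0) ((a - s.re) / 2) (-a)
  have h_bot : (fun t => log t ^ n • f t) =O[𝓝[>] 0] (· ^ (-(b + (s.re - b) / 2))) := by
    refine ((isBigO_log_pow_rpow_nhdsGT_zero n hε_bot).smul hf_bot).trans_eventuallyEq ?_
    simpa only [smul_eq_mul, neg_add, add_comm] using
      eventuallyEq_rpow_mul_rpow (eventually_mem_nhdsWithin (s := Ioi 0))
        (-((s.re - b) / 2)) (-b)
  simpa only [smul_smul, ← pow_succ'] using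
    (mellin_hasDerivAt_of_isBigO_rpow hfc' h_top (by linarith) h_bot (by linarith)).2

lemma mellin_ofReal (f : ℝ → ℝ) (s : ℝ) :
    mellin (fun t => (f t : ℂ)) s = ((∫ t in Ioi 0, t ^ (s - 1) * f t : ℝ) : ℂ) := by
  rw [mellin, ← integral_complex_ofReal]
  refine setIntegral_congr_fun measurableSet_Ioi fun t (ht : 0 < t) => ?_
  rw [smul_eq_mul, Complex.ofReal_mul, Complex.ofReal_cpow ht.le, Complex.ofReal_sub,
    Complex.ofReal_one]

lemma hasDerivAt_mellin_log_pow_mul_exp_neg (n : ℕ) {s : ℂ} (hs : 0 < s.re) :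
    HasDerivAt (mellin fun t => ((log t ^ n * exp (-t) : ℝ) : ℂ))
      (mellin (fun t => ((log t ^ (n + 1) * exp (-t) : ℝ) : ℂ)) s) s := by
  have hexp : Continuous fun t : ℝ => ((exp (-t) : ℝ) : ℂ) := by fun_prop
  have h_top : (fun t : ℝ => ((exp (-t) : ℝ) : ℂ)) =O[atTop] (· ^ (-(s.re + 1))) := by
    rw [← isBigO_norm_left]
    simpa only [Complex.norm_real, norm_eq_abs, abs_exp, neg_one_mul] using
      (isLittleO_exp_neg_mul_rpow_atTop zero_lt_one _).isBigO
  have h_bot : (fun t : ℝ => ((exp (-t) : ℝ) : ℂ)) =O[𝓝[>] 0] (· ^ (-0 : ℝ)) := by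
    simp_rw [neg_zero, rpow_zero]
    exact isBigO_const_of_tendsto ((hexp.tendsto' 0 1 (by simp)).mono_left nhdsWithin_le_nhds)
      one_ne_zero
  simpa only [Complex.real_smul, Complex.ofReal_mul, Complex.ofReal_pow] using
    hasDerivAt_mellin_log_pow_smul (hexp.continuousOn.locallyIntegrableOn measurableSet_Ioi)
      h_top (lt_add_one _) h_bot hs n

lemma iteratedDeriv_Gamma_eq_integral (n : ℕ) {s : ℝ} (hs : 0 < s) :
    iteratedDeriv n Gamma s = ∫ t in Ioi 0, t ^ (s - 1) * (log t ^ n * exp (-t)) := by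
  rw [← Complex.ofReal_re (∫ t in Ioi 0, _), ← mellin_ofReal]
  induction n generalizing s with
  | zero =>
    simp only [iteratedDeriv_zero, pow_zero, one_mul]
    rw [← Complex.GammaIntegral_eq_mellin, ← Complex.Gamma_eq_integral (by simpa using hs),
      Complex.Gamma_ofReal, Complex.ofReal_re]
  | succ n ih =>
    have hev : iteratedDeriv n Gamma =ᶠ[𝓝 s]
        fun x : ℝ => (mellin (fun t => ((log t ^ n * exp (-t) : ℝ) : ℂ)) x).re :=
      eventually_of_mem (isOpen_Ioi.mem_nhds hs) fun x hx => ih hx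
    rw [iteratedDeriv_succ, hev.deriv_eq]
    exact (hasDerivAt_mellin_log_pow_mul_exp_neg n (by simpa using hs)).real_of_complex.deriv

lemma gumbelPdf_eq_inv_mul_gumbelPdf (μ σ x : ℝ) :
    gumbelPdf μ σ x = σ⁻¹ * gumbelPdf 0 1 ((x - μ) / σ) := by
  simp only [gumbelPdf, sub_zero, div_one, one_div]
  ring

lemma integral_comp_standardize_mul_gumbelPdf (g : ℝ → ℝ) (μ : ℝ) {σ : ℝ} (hσ : 0 < σ) :
    ∫ x, g ((x - μ) / σ) * gumbelPdf μ σ x = ∫ u, g u * gumbelPdf 0 1 u := by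
  simp_rw [gumbelPdf_eq_inv_mul_gumbelPdf μ σ, mul_left_comm _ σ⁻¹]
  rw [integral_const_mul,
    integral_sub_right_eq_self (fun y => g (y / σ) * gumbelPdf 0 1 (y / σ)) μ,
    Measure.integral_comp_div (fun u => g u * gumbelPdf 0 1 u), abs_of_pos hσ, smul_eq_mul,
    inv_mul_cancel_left₀ hσ.ne']

lemma integral_mul_gumbelPdf_zero_one (g : ℝ → ℝ) :
    ∫ u, g u * gumbelPdf 0 1 u = ∫ t in Ioi 0, g (-log t) * exp (-t) := by
  have h := integral_image_eq_integral_abs_deriv_smul MeasurableSet.univ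
    (fun x _ => (hasDerivAt_exp x).hasDerivWithinAt) exp_injective.injOn
    fun t => g (-log t) * exp (-t)
  rw [image_univ, range_exp, Measure.restrict_univ] at h
  rw [h, ← integral_neg_eq_self]
  congr 1
  funext x
  simp only [gumbelPdf, abs_of_pos (exp_pos x), log_exp, neg_neg, sub_zero, div_one, one_mul,
    smul_eq_mul]
  ring

theorem gumbel_moment_identity (μ σ : ℝ) (hσ : 0 < σ) (k n : ℕ) :
    ∫ x : ℝ, ((x - μ) / σ) ^ n * Real.exp (-(k : ℝ) * ((x - μ) / σ)) * gumbelPdf μ σ x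
      = (-1 : ℝ) ^ n * iteratedDeriv n Real.Gamma ((k : ℝ) + 1) := by
  rw [integral_comp_standardize_mul_gumbelPdf (fun u => u ^ n * exp (-(k : ℝ) * u)) μ hσ,
    integral_mul_gumbelPdf_zero_one, iteratedDeriv_Gamma_eq_integral n (by positivity),
    ← integral_const_mul]
  refine setIntegral_congr_fun measurableSet_Ioi fun t (ht : 0 < t) => ?_
  simp only [add_sub_cancel_right, rpow_def_of_pos ht, neg_mul_neg, neg_pow (log t)]
  rw [mul_comm (log t)]
  ring
end

section
/- Let μ ∈ ℝ and σ > 0. Then the Fisher information entry i_{μμ} of the Gumbel(μ,σ) distribution satisfies ∫_ℝ (s_μ(x;μ,σ))² · f(x;μ,σ) dx = 1/σ². -/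
/-!
With `u = exp (-(x - μ) / σ)` the integrand is `u e⁻ᵘ (1 - u)² / σ³` and `du/dx = -u / σ`, so
`e⁻ᵘ (u² + 1) / σ²` is an antiderivative. It tends to `0` as `x → -∞` (`u → ∞`) and to `1 / σ²`
as `x → ∞` (`u → 0`); as the integrand is nonnegative, these limits also make it integrable.
-/

open MeasureTheory Real

/-- Score of the Gumbel distribution with respect to the location parameter μ. -/
noncomputable def gumbelScoreMu (μ σ x : ℝ) : ℝ :=
  (1 / σ) * (1 - Real.exp (-((x - μ) / σ)))

open Filter Topology

section DerivNonneg

variable {g g' : ℝ → ℝ} {a b : ℝ}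

theorem integrable_deriv_of_nonneg (hderiv : ∀ x, HasDerivAt g (g' x) x) (hpos : ∀ x, 0 ≤ g' x)
    (hbot : Tendsto g atBot (𝓝 a)) (htop : Tendsto g atTop (𝓝 b)) : Integrable g' := by
  have hcont : Continuous g := continuous_iff_continuousAt.2 fun x => (hderiv x).continuousAt
  refine integrable_of_intervalIntegral_norm_tendsto (b - a)
    (fun i => intervalIntegral.integrableOn_deriv_of_nonneg hcont.continuousOn
      (fun x _ => hderiv x) fun x _ => hpos x) tendsto_neg_atTop_atBot tendsto_id ?_
  have hFTC : ∀ i : ℝ, ∫ x in -i..id i, ‖g' x‖ = g i - g (-i) := fun i => by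
    simp_rw [Real.norm_of_nonneg (hpos _)]
    exact intervalIntegral.integral_eq_sub_of_hasDerivAt (fun x _ => hderiv x)
      (intervalIntegral.intervalIntegrable_deriv_of_nonneg hcont.continuousOn
        (fun x _ => hderiv x) fun x _ => hpos x)
  simp_rw [hFTC]
  exact htop.sub (hbot.comp tendsto_neg_atTop_atBot)

theorem integral_of_hasDerivAt_of_nonneg (hderiv : ∀ x, HasDerivAt g (g' x) x)
    (hpos : ∀ x, 0 ≤ g' x) (hbot : Tendsto g atBot (𝓝 a)) (htop : Tendsto g atTop (𝓝 b)) :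
    ∫ x, g' x = b - a :=
  integral_of_hasDerivAt_of_tendsto hderiv (integrable_deriv_of_nonneg hderiv hpos hbot htop)
    hbot htop

end DerivNonneg

theorem tendsto_exp_neg_mul_sq_add_one_atTop :
    Tendsto (fun u : ℝ => exp (-u) * (u ^ 2 + 1)) atTop (𝓝 0) := by
  have h := (tendsto_pow_mul_exp_neg_atTop_nhds_zero 2).add
    (tendsto_exp_atBot.comp tendsto_neg_atTop_atBot)
  rw [add_zero] at h
  exact h.congr fun u => by simp only [Function.comp_apply]; ring

section Gumbel

variable {μ σ : ℝ}

theorem gumbelPdf_nonneg (hσ : 0 ≤ σ) (x : ℝ) : 0 ≤ gumbelPdf μ σ x := by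
  unfold gumbelPdf
  positivity

theorem tendsto_exp_neg_div_atTop (hσ : 0 < σ) :
    Tendsto (fun x => exp (-((x - μ) / σ))) atTop (𝓝 0) :=
  tendsto_exp_atBot.comp <| tendsto_neg_atTop_atBot.comp <|
    (tendsto_atTop_add_const_right _ _ tendsto_id).atTop_div_const hσ

theorem tendsto_exp_neg_div_atBot (hσ : 0 < σ) :
    Tendsto (fun x => exp (-((x - μ) / σ))) atBot atTop :=
  tendsto_exp_atTop.comp <| tendsto_neg_atBot_atTop.comp <|
    (tendsto_atBot_add_const_right _ _ tendsto_id).atBot_div_const hσ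

noncomputable def gumbelFisherMuMuPrimitive (μ σ x : ℝ) : ℝ :=
  (1 / σ ^ 2) * (exp (-exp (-((x - μ) / σ))) * (exp (-((x - μ) / σ)) ^ 2 + 1))

theorem hasDerivAt_gumbelFisherMuMuPrimitive (hσ : σ ≠ 0) (x : ℝ) :
    HasDerivAt (gumbelFisherMuMuPrimitive μ σ)
      (gumbelScoreMu μ σ x ^ 2 * gumbelPdf μ σ x) x := by
  have hu : HasDerivAt (fun x => exp (-((x - μ) / σ)))
      (exp (-((x - μ) / σ)) * -(1 / σ)) x :=
    (((hasDerivAt_id x).sub_const μ).div_const σ).neg.exp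
  refine ((hu.neg.exp.mul ((hu.pow 2).add_const 1)).const_mul (1 / σ ^ 2)).congr_deriv ?_
  simp only [gumbelScoreMu, gumbelPdf, Pi.neg_apply, Pi.pow_apply]
  field_simp
  ring

theorem tendsto_gumbelFisherMuMuPrimitive_atTop (hσ : 0 < σ) :
    Tendsto (gumbelFisherMuMuPrimitive μ σ) atTop (𝓝 (1 / σ ^ 2)) := by
  have hu := tendsto_exp_neg_div_atTop (μ := μ) hσ
  have h := (hu.neg.rexp.mul ((hu.pow 2).add_const 1)).const_mul (1 / σ ^ 2)
  rwa [neg_zero, exp_zero, zero_pow two_ne_zero, zero_add, mul_one, mul_one] at h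

theorem tendsto_gumbelFisherMuMuPrimitive_atBot (hσ : 0 < σ) :
    Tendsto (gumbelFisherMuMuPrimitive μ σ) atBot (𝓝 0) := by
  have h := (tendsto_exp_neg_mul_sq_add_one_atTop.comp
    (tendsto_exp_neg_div_atBot (μ := μ) hσ)).const_mul (1 / σ ^ 2)
  rwa [mul_zero] at h

end Gumbel

theorem gumbel_fisher_mu_mu (μ σ : ℝ) (hσ : 0 < σ) :
    ∫ x : ℝ, (gumbelScoreMu μ σ x) ^ 2 * gumbelPdf μ σ x = 1 / σ ^ 2 := by
  have h := integral_of_hasDerivAt_of_nonneg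
    (hasDerivAt_gumbelFisherMuMuPrimitive (μ := μ) hσ.ne')
    (fun x => mul_nonneg (sq_nonneg _) (gumbelPdf_nonneg hσ.le x))
    (tendsto_gumbelFisherMuMuPrimitive_atBot hσ) (tendsto_gumbelFisherMuMuPrimitive_atTop hσ)
  rwa [sub_zero] at h
end

section
/- Let μ ∈ ℝ and σ > 0. Then the Fisher information cross entry i_{μσ} of the Gumbel(μ,σ) distribution satisfies ∫_ℝ s_μ(x;μ,σ) · s_σ(x;μ,σ) · f(x;μ,σ) dx = (γ − 1)/σ², where γ is the Euler–Mascheroni constant. -/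
/-!
The substitution `u = (x - μ) / σ` reduces the integral to `σ⁻²` times the same integral for the
standard Gumbel law, and `t = exp (-u)` turns the latter into a combination of the Gamma moments
`∫₀^∞ tⁿ e⁻ᵗ dt = n!` and `∫₀^∞ tⁿ log t e⁻ᵗ dt = Γ'(n + 1) = n! (Hₙ - γ)` for `n ≤ 2`; the
logarithmic ones are where `γ` enters.
-/

open MeasureTheory Real

/-- Score of the Gumbel distribution with respect to the scale parameter σ. -/
noncomputable def gumbelScoreSigma (μ σ x : ℝ) : ℝ :=
  ((x - μ) / σ ^ 2) * (1 - Real.exp (-((x - μ) / σ))) - 1 / σ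

open Set Filter Asymptotics Topology

theorem Complex.mellinConvergent_log_smul_exp_neg {s : ℂ} (hs : 0 < s.re) :
    MellinConvergent (fun t : ℝ ↦ Real.log t • ((Real.exp (-t) : ℝ) : ℂ)) s := by
  refine (mellin_hasDerivAt_of_isBigO_rpow ?_ ?_ (lt_add_one _) ?_ hs).1
  · exact (Continuous.continuousOn (by fun_prop)).locallyIntegrableOn measurableSet_Ioi
  · rw [← isBigO_norm_left]
    simp_rw [Complex.norm_real, isBigO_norm_left]
    simpa only [neg_one_mul] using (isLittleO_exp_neg_mul_rpow_atTop zero_lt_one _).isBigO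
  · simp_rw [neg_zero, rpow_zero]
    refine isBigO_const_of_tendsto (?_ : Tendsto _ _ (𝓝 (1 : ℂ))) one_ne_zero
    rw [(by simp : (1 : ℂ) = Real.exp (-0))]
    exact (Complex.continuous_ofReal.comp
      (Real.continuous_exp.comp continuous_neg)).continuousWithinAt

private lemma cpow_natCast_add_one_sub_one_mul (n : ℕ) (t : ℝ) :
    (t : ℂ) ^ ((n : ℂ) + 1 - 1) * (Real.log t * Real.exp (-t))
      = ((t ^ n * Real.log t * Real.exp (-t) : ℝ) : ℂ) := by
  rw [add_sub_cancel_right, Complex.cpow_natCast]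
  push_cast; ring

theorem integrableOn_pow_mul_log_mul_exp_neg (n : ℕ) :
    IntegrableOn (fun t : ℝ ↦ t ^ n * Real.log t * Real.exp (-t)) (Ioi 0) := by
  have h := Complex.mellinConvergent_log_smul_exp_neg (s := n + 1) (by simp; positivity)
  simp only [MellinConvergent, Complex.real_smul, smul_eq_mul,
    cpow_natCast_add_one_sub_one_mul] at h
  simpa only [IntegrableOn, RCLike.re_to_complex, Complex.ofReal_re] using h.re

theorem integral_pow_mul_log_mul_exp_neg (n : ℕ) :
    ∫ t in Ioi (0 : ℝ), t ^ n * Real.log t * Real.exp (-t)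
      = n.factorial * (-eulerMascheroniConstant + harmonic n) := by
  have hs : 0 < ((n : ℂ) + 1).re := by simp; positivity
  have hΓ : Complex.GammaIntegral =ᶠ[𝓝 ((n : ℂ) + 1)] Complex.Gamma :=
    eventually_of_mem ((isOpen_lt continuous_const Complex.continuous_re).mem_nhds hs)
      fun z hz ↦ (Complex.Gamma_eq_integral hz).symm
  have h := (Complex.hasDerivAt_GammaIntegral hs).unique
    ((Complex.hasDerivAt_Gamma_nat n).congr_of_eventuallyEq hΓ)
  simp only [cpow_natCast_add_one_sub_one_mul] at h
  exact_mod_cast h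

theorem integrableOn_pow_mul_exp_neg (n : ℕ) :
    IntegrableOn (fun t : ℝ ↦ t ^ n * Real.exp (-t)) (Ioi 0) := by
  refine (Real.GammaIntegral_convergent (s := n + 1) (by positivity)).congr_fun
    (fun t _ ↦ ?_) measurableSet_Ioi
  simp [← rpow_natCast, mul_comm]

theorem integral_pow_mul_exp_neg (n : ℕ) :
    ∫ t in Ioi (0 : ℝ), t ^ n * Real.exp (-t) = n.factorial := by
  rw [← Real.Gamma_nat_eq_factorial, Real.Gamma_eq_integral (by positivity)]
  refine setIntegral_congr_fun measurableSet_Ioi fun t _ ↦ ?_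
  simp [← rpow_natCast, mul_comm]

theorem integral_eq_integral_Ioi_inv_smul_comp_neg_log {E : Type*} [NormedAddCommGroup E]
    [NormedSpace ℝ E] (g : ℝ → E) :
    ∫ u, g u = ∫ t in Ioi 0, t⁻¹ • g (-Real.log t) := by
  calc ∫ u, g u = ∫ u, g (-u) := (integral_neg_eq_self g volume).symm
    _ = ∫ u in univ, |Real.exp u| • (Real.exp u)⁻¹ • g (-Real.log (Real.exp u)) := by
      simp [smul_smul, (Real.exp_pos _).ne']
    _ = ∫ t in Real.exp '' univ, t⁻¹ • g (-Real.log t) :=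
      (integral_image_eq_integral_abs_deriv_smul MeasurableSet.univ
        (fun u _ ↦ (hasDerivAt_exp u).hasDerivWithinAt) Real.exp_injective.injOn
        (fun t ↦ t⁻¹ • g (-Real.log t))).symm
    _ = ∫ t in Ioi 0, t⁻¹ • g (-Real.log t) := by rw [image_univ, Real.range_exp]

theorem integral_comp_sub_div {E : Type*} [NormedAddCommGroup E] [NormedSpace ℝ E]
    (g : ℝ → E) (μ σ : ℝ) : ∫ x, g ((x - μ) / σ) = |σ| • ∫ u, g u := by
  rw [integral_sub_right_eq_self (fun y ↦ g (y / σ)) μ, Measure.integral_comp_div]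

theorem gumbel_scoreMu_mul_scoreSigma_mul_pdf_eq_standard (μ σ x : ℝ) (hσ : σ ≠ 0) :
    gumbelScoreMu μ σ x * gumbelScoreSigma μ σ x * gumbelPdf μ σ x
      = (σ ^ 3)⁻¹ * (gumbelScoreMu 0 1 ((x - μ) / σ) * gumbelScoreSigma 0 1 ((x - μ) / σ)
          * gumbelPdf 0 1 ((x - μ) / σ)) := by
  simp only [gumbelScoreMu, gumbelScoreSigma, gumbelPdf, sub_zero, div_one, one_pow]
  field_simp

theorem integral_gumbel_scoreMu_mul_scoreSigma_mul_pdf_standard :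
    ∫ u, gumbelScoreMu 0 1 u * gumbelScoreSigma 0 1 u * gumbelPdf 0 1 u
      = eulerMascheroniConstant - 1 := by
  have hlog := integrableOn_pow_mul_log_mul_exp_neg
  have hpow := integrableOn_pow_mul_exp_neg
  have hpoint : EqOn
      (fun t ↦ t⁻¹ • (gumbelScoreMu 0 1 (-Real.log t) * gumbelScoreSigma 0 1 (-Real.log t)
        * gumbelPdf 0 1 (-Real.log t)))
      (fun t ↦ (2 * (t ^ 1 * Real.log t * Real.exp (-t)) - t ^ 0 * Real.log t * Real.exp (-t)
          - t ^ 2 * Real.log t * Real.exp (-t))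
        + (t ^ 1 * Real.exp (-t) - t ^ 0 * Real.exp (-t))) (Ioi 0) := by
    intro t (ht : 0 < t)
    simp only [gumbelScoreMu, gumbelScoreSigma, gumbelPdf, sub_zero, div_one, neg_neg,
      Real.exp_log ht, smul_eq_mul]
    field_simp
    ring
  rw [integral_eq_integral_Ioi_inv_smul_comp_neg_log,
    setIntegral_congr_fun measurableSet_Ioi hpoint,
    integral_add (((hlog 1).const_mul 2 |>.sub' (hlog 0)).sub' (hlog 2)) ((hpow 1).sub' (hpow 0)),
    integral_sub (((hlog 1).const_mul 2).sub' (hlog 0)) (hlog 2),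
    integral_sub ((hlog 1).const_mul 2) (hlog 0),
    integral_const_mul, integral_sub (hpow 1) (hpow 0), integral_pow_mul_log_mul_exp_neg,
    integral_pow_mul_log_mul_exp_neg, integral_pow_mul_log_mul_exp_neg, integral_pow_mul_exp_neg,
    integral_pow_mul_exp_neg]
  norm_num [harmonic_succ]
  ring

theorem gumbel_fisher_mu_sigma (μ σ : ℝ) (hσ : 0 < σ) :
    ∫ x : ℝ, gumbelScoreMu μ σ x * gumbelScoreSigma μ σ x * gumbelPdf μ σ x
      = (Real.eulerMascheroniConstant - 1) / σ ^ 2 := by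
  simp_rw [gumbel_scoreMu_mul_scoreSigma_mul_pdf_eq_standard μ σ _ hσ.ne']
  rw [integral_const_mul,
    integral_comp_sub_div fun u ↦ gumbelScoreMu 0 1 u * gumbelScoreSigma 0 1 u * gumbelPdf 0 1 u,
    integral_gumbel_scoreMu_mul_scoreSigma_mul_pdf_standard, abs_of_pos hσ, smul_eq_mul]
  field_simp
end

section
/- Let σ > 0 and ξ > 0. Then the Fisher information entry i_{σσ} of the GEV₂(σ,ξ) distribution satisfies ∫_0^∞ (s_σ(x;σ,ξ))² · f(x;σ,ξ) dx = 1/(ξσ)². -/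
open MeasureTheory Real

/-- Density of the two-parameter GEV distribution GEV₂(σ,ξ), for x > 0 and ξ > 0. -/
noncomputable def gev2Pdf (σ ξ x : ℝ) : ℝ :=
  (1 / σ) * (ξ * x / σ) ^ (-1 - 1 / ξ) * Real.exp (-(ξ * x / σ) ^ (-1 / ξ))

/-- Score of the GEV₂ distribution with respect to the scale parameter σ. -/
noncomputable def gev2ScoreSigma (σ ξ x : ℝ) : ℝ :=
  (1 / (ξ * σ)) * (1 - (ξ * x / σ) ^ (-1 / ξ))

/-! The map `x ↦ (ξ x / σ) ^ (-1/ξ)` sends GEV₂(σ,ξ) to the standard exponential law, under which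
the σ-score becomes `(1 - u) / (ξ σ)`; so `i_σσ` is the variance of `Exp(1)`, namely `1`,
divided by `(ξ σ)²`. -/

theorem integral_one_sub_sq_mul_exp_neg_Ioi :
    ∫ u in Set.Ioi (0 : ℝ), (1 - u) ^ 2 * exp (-u) = 1 := by
  have hΓ1 := GammaIntegral_convergent (s := 1) one_pos
  have hΓ2 := GammaIntegral_convergent (s := 2) two_pos
  have hΓ3 := GammaIntegral_convergent (s := 3) three_pos
  calc ∫ u in Set.Ioi (0 : ℝ), (1 - u) ^ 2 * exp (-u)
      = ∫ u in Set.Ioi (0 : ℝ), (exp (-u) * u ^ ((1 : ℝ) - 1) - 2 * (exp (-u) * u ^ ((2 : ℝ) - 1)))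
          + exp (-u) * u ^ ((3 : ℝ) - 1) := by
        refine setIntegral_congr_fun measurableSet_Ioi fun u _ => ?_
        rw [show (1 : ℝ) - 1 = 0 by norm_num, show (2 : ℝ) - 1 = 1 by norm_num,
          show (3 : ℝ) - 1 = (2 : ℕ) by norm_num, rpow_zero, rpow_one, rpow_natCast]
        ring
    _ = Gamma 1 - 2 * Gamma 2 + Gamma 3 := by
        rw [integral_add ?_ hΓ3, integral_sub hΓ1 (hΓ2.const_mul 2), integral_const_mul,
          Gamma_eq_integral one_pos, Gamma_eq_integral two_pos, Gamma_eq_integral three_pos]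
        exact hΓ1.sub (hΓ2.const_mul 2)
    _ = 1 := by
        rw [show (3 : ℝ) = (2 : ℕ) + 1 by norm_num, Gamma_nat_eq_factorial]
        norm_num

theorem integral_comp_mul_gev2Pdf_Ioi {σ ξ : ℝ} (hσ : 0 < σ) (hξ : 0 < ξ) (F : ℝ → ℝ) :
    ∫ x in Set.Ioi (0 : ℝ), F ((ξ * x / σ) ^ (-1 / ξ)) * gev2Pdf σ ξ x
      = ∫ u in Set.Ioi (0 : ℝ), F u * exp (-u) := by
  set p := -1 / ξ with hp_def
  have ha : 0 < ξ / σ := div_pos hξ hσ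
  have hp : p ≠ 0 := by positivity
  have habs : |p| = 1 / ξ := by rw [hp_def, neg_div, abs_neg, abs_of_pos (by positivity)]
  calc ∫ x in Set.Ioi (0 : ℝ), F ((ξ * x / σ) ^ p) * gev2Pdf σ ξ x
      = ∫ x in Set.Ioi (0 : ℝ), ξ / σ *
          ((|p| * (ξ / σ * x) ^ (p - 1)) • (F ((ξ / σ * x) ^ p) * exp (-(ξ / σ * x) ^ p))) := by
        refine setIntegral_congr_fun measurableSet_Ioi fun x _ => ?_
        rw [gev2Pdf, ← hp_def, habs, smul_eq_mul, show p - 1 = -1 - 1 / ξ by ring,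
          div_mul_eq_mul_div]
        field_simp
    _ = (ξ / σ)⁻¹ • ∫ y in Set.Ioi (ξ / σ * 0), ξ / σ *
          ((|p| * y ^ (p - 1)) • (F (y ^ p) * exp (-y ^ p))) :=
        integral_comp_mul_left_Ioi (fun y => ξ / σ *
          ((|p| * y ^ (p - 1)) • (F (y ^ p) * exp (-y ^ p)))) 0 ha
    _ = ∫ u in Set.Ioi (0 : ℝ), F u * exp (-u) := by
        rw [mul_zero, integral_const_mul, integral_comp_rpow_Ioi (fun u => F u * exp (-u)) hp,
          smul_eq_mul, inv_mul_cancel_left₀ ha.ne']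

theorem gev2_fisher_sigma_sigma (σ ξ : ℝ) (hσ : 0 < σ) (hξ : 0 < ξ) :
    ∫ x in Set.Ioi (0 : ℝ), (gev2ScoreSigma σ ξ x) ^ 2 * gev2Pdf σ ξ x
      = 1 / (ξ * σ) ^ 2 := by
  calc ∫ x in Set.Ioi (0 : ℝ), (gev2ScoreSigma σ ξ x) ^ 2 * gev2Pdf σ ξ x
      = ∫ x in Set.Ioi (0 : ℝ),
          (fun u => (1 / (ξ * σ)) ^ 2 * (1 - u) ^ 2) ((ξ * x / σ) ^ (-1 / ξ)) * gev2Pdf σ ξ x := by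
        simp only [gev2ScoreSigma, mul_pow]
    _ = ∫ u in Set.Ioi (0 : ℝ), (fun u => (1 / (ξ * σ)) ^ 2 * (1 - u) ^ 2) u * exp (-u) :=
        integral_comp_mul_gev2Pdf_Ioi hσ hξ fun u => (1 / (ξ * σ)) ^ 2 * (1 - u) ^ 2
    _ = 1 / (ξ * σ) ^ 2 := by
        simp only [mul_assoc]
        rw [integral_const_mul, integral_one_sub_sq_mul_exp_neg_Ioi, mul_one, one_div_pow]
end

section
/- Let σ > 0 and ξ > 0. Then the Fisher information entry i_{ξξ} of the GP(σ,ξ) distribution satisfies ∫_0^∞ (s_ξ(x;σ,ξ))² · f(x;σ,ξ) dx = 2/((1+ξ)(1+2ξ)). -/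
open MeasureTheory Real

/-- Density of the two-parameter Generalised Pareto distribution GP(σ,ξ), for x > 0. -/
noncomputable def gpPdf (σ ξ x : ℝ) : ℝ :=
  (1 / σ) * (1 + ξ * x / σ) ^ (-1 - 1 / ξ)

/-- Score of the GP distribution with respect to the shape parameter ξ. -/
noncomputable def gpScoreXi (σ ξ x : ℝ) : ℝ :=
  (1 / ξ ^ 2) * Real.log (1 + ξ * x / σ) - (1 + 1 / ξ) * x / (σ + ξ * x)

/-!
Substitute `t = log (1 + ξ x / σ)`, which is exponentially distributed with mean `ξ`. Since
`x / (σ + ξ x) = (1 - e⁻ᵗ) / ξ`, the score becomes `(t - (1 + ξ) (1 - e⁻ᵗ)) / ξ²`, and the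
integrand becomes the exponential polynomial `(t - (1 + ξ) (1 - e⁻ᵗ))² e^{-t/ξ} / ξ⁵` in `t`,
which has an explicit primitive. That primitive vanishes at `∞` and equals
`-2 / ((1 + ξ) (1 + 2ξ))` at `0`.
-/

open Filter Topology

theorem tendsto_pow_mul_exp_neg_mul_atTop_nhds_zero (n : ℕ) {b : ℝ} (hb : 0 < b) :
    Tendsto (fun x : ℝ => x ^ n * rexp (-b * x)) atTop (𝓝 0) := by
  simpa [Real.rpow_natCast] using tendsto_rpow_mul_exp_neg_mul_atTop_nhds_zero n b hb

noncomputable def gpFisherXiPrimitive (ξ t : ℝ) : ℝ :=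
  rexp (-t / ξ) * (-t ^ 2 + 2 * t - 1 - ξ ^ 2
    + rexp (-t) * (-2 * t + 2 * (1 + ξ + ξ ^ 2) / (1 + ξ))
    - rexp (-t) ^ 2 * ((1 + ξ) ^ 2 / (1 + 2 * ξ))) / ξ ^ 4

section Primitive

variable {ξ : ℝ}

theorem hasDerivAt_gpFisherXiPrimitive (hξ : 0 < ξ) (t : ℝ) :
    HasDerivAt (gpFisherXiPrimitive ξ)
      ((t - (1 + ξ) * (1 - rexp (-t))) ^ 2 * rexp (-t / ξ) / ξ ^ 5) t := by
  have hE : HasDerivAt (fun t => rexp (-t / ξ)) (rexp (-t / ξ) * (-1 / ξ)) t :=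
    (((hasDerivAt_id t).neg).div_const ξ).exp
  have he : HasDerivAt (fun t => rexp (-t)) (rexp (-t) * (-1)) t :=
    (hasDerivAt_id t).neg.exp
  have hP : HasDerivAt (fun t : ℝ => -t ^ 2 + 2 * t - 1 - ξ ^ 2) (-(2 * t) + 2) t := by
    simpa using
      (((hasDerivAt_pow 2 t).neg.add ((hasDerivAt_id t).const_mul 2)).sub_const 1).sub_const (ξ ^ 2)
  have hQ : HasDerivAt (fun t : ℝ => -2 * t + 2 * (1 + ξ + ξ ^ 2) / (1 + ξ)) (-2) t := by
    simpa using ((hasDerivAt_id t).const_mul (-2)).add_const (2 * (1 + ξ + ξ ^ 2) / (1 + ξ))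
  refine ((hE.mul ((hP.add (he.mul hQ)).sub
    ((he.pow 2).mul_const ((1 + ξ) ^ 2 / (1 + 2 * ξ))))).div_const (ξ ^ 4)).congr_deriv ?_
  simp only [Pi.add_apply, Pi.sub_apply, Pi.mul_apply, Pi.pow_apply, Nat.cast_ofNat,
    Nat.add_one_sub_one, pow_one]
  field_simp
  ring

theorem gpFisherXiPrimitive_zero (hξ : 0 < ξ) :
    gpFisherXiPrimitive ξ 0 = -(2 / ((1 + ξ) * (1 + 2 * ξ))) := by
  simp only [gpFisherXiPrimitive, neg_zero, zero_div, Real.exp_zero]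
  field_simp
  ring

theorem tendsto_gpFisherXiPrimitive_atTop (hξ : 0 < ξ) :
    Tendsto (gpFisherXiPrimitive ξ) atTop (𝓝 0) := by
  have hpow (n : ℕ) : Tendsto (fun t : ℝ => t ^ n * rexp (-t / ξ)) atTop (𝓝 0) :=
    (tendsto_pow_mul_exp_neg_mul_atTop_nhds_zero n (inv_pos.2 hξ)).congr fun t => by
      rw [neg_div, div_eq_inv_mul, neg_mul]
  have he : Tendsto (fun t : ℝ => rexp (-t)) atTop (𝓝 0) := tendsto_exp_neg_atTop_nhds_zero
  have hsum := (((((hpow 2).neg.add ((hpow 1).const_mul 2)).sub ((hpow 0).const_mul (1 + ξ ^ 2))).add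
    (he.mul (((hpow 1).const_mul (-2)).add
      ((hpow 0).const_mul (2 * (1 + ξ + ξ ^ 2) / (1 + ξ)))))).sub
    ((he.pow 2).mul ((hpow 0).const_mul ((1 + ξ) ^ 2 / (1 + 2 * ξ))))).div_const (ξ ^ 4)
  simp only [mul_zero, add_zero, neg_zero, sub_zero, zero_div] at hsum
  refine hsum.congr fun t => ?_
  simp only [gpFisherXiPrimitive]
  ring

end Primitive

section Reparametrization

variable {σ ξ x : ℝ}

theorem gpScoreXi_eq (hσ : σ ≠ 0) (hξ : ξ ≠ 0) (hu : 0 < 1 + ξ * x / σ) :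
    gpScoreXi σ ξ x = (Real.log (1 + ξ * x / σ)
      - (1 + ξ) * (1 - rexp (-Real.log (1 + ξ * x / σ)))) / ξ ^ 2 := by
  have hσx : σ + ξ * x ≠ 0 := by
    rw [show σ + ξ * x = σ * (1 + ξ * x / σ) by field_simp]
    exact mul_ne_zero hσ hu.ne'
  rw [gpScoreXi, exp_neg, exp_log hu]
  field_simp
  ring

theorem gpPdf_eq (hσ : σ ≠ 0) (hu : 0 < 1 + ξ * x / σ) :
    gpPdf σ ξ x = rexp (-Real.log (1 + ξ * x / σ) / ξ) / (σ + ξ * x) := by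
  have hexp : rexp (Real.log (1 + ξ * x / σ) * (-1 - 1 / ξ))
      = rexp (-Real.log (1 + ξ * x / σ) / ξ) * rexp (-Real.log (1 + ξ * x / σ)) := by
    rw [← exp_add]; ring_nf
  rw [gpPdf, rpow_def_of_pos hu, hexp, exp_neg, exp_log hu]
  field_simp

theorem hasDerivAt_log_one_add_mul_div (hσ : σ ≠ 0) (hu : 0 < 1 + ξ * x / σ) :
    HasDerivAt (fun x => Real.log (1 + ξ * x / σ)) (ξ / (σ + ξ * x)) x := by
  have hlin : HasDerivAt (fun x => 1 + ξ * x / σ) (ξ / σ) x := by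
    simpa using (((hasDerivAt_id x).const_mul ξ).div_const σ).const_add 1
  refine (hlin.log hu.ne').congr_deriv ?_
  field_simp

end Reparametrization

theorem gp_fisher_xi_xi (σ ξ : ℝ) (hσ : 0 < σ) (hξ : 0 < ξ) :
    ∫ x in Set.Ioi (0 : ℝ), (gpScoreXi σ ξ x) ^ 2 * gpPdf σ ξ x
      = 2 / ((1 + ξ) * (1 + 2 * ξ)) := by
  have hu : ∀ x ∈ Set.Ici (0 : ℝ), 0 < 1 + ξ * x / σ := fun x (hx : 0 ≤ x) => by positivity
  have hderiv : ∀ x ∈ Set.Ici (0 : ℝ),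
      HasDerivAt (gpFisherXiPrimitive ξ ∘ fun x => Real.log (1 + ξ * x / σ))
        (gpScoreXi σ ξ x ^ 2 * gpPdf σ ξ x) x := fun x hx => by
    refine ((hasDerivAt_gpFisherXiPrimitive hξ _).comp x
      (hasDerivAt_log_one_add_mul_div hσ.ne' (hu x hx))).congr_deriv ?_
    rw [gpScoreXi_eq hσ.ne' hξ.ne' (hu x hx), gpPdf_eq hσ.ne' (hu x hx)]
    field_simp
  have hnonneg : ∀ x ∈ Set.Ioi (0 : ℝ), 0 ≤ gpScoreXi σ ξ x ^ 2 * gpPdf σ ξ x :=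
    fun x (hx : 0 < x) => by unfold gpPdf; positivity
  have hlim : Tendsto (gpFisherXiPrimitive ξ ∘ fun x => Real.log (1 + ξ * x / σ)) atTop (𝓝 0) :=
    (tendsto_gpFisherXiPrimitive_atTop hξ).comp (tendsto_log_atTop.comp
      (tendsto_atTop_add_const_left _ _ ((tendsto_id.const_mul_atTop hξ).atTop_div_const hσ)))
  rw [integral_Ioi_of_hasDerivAt_of_nonneg' hderiv hnonneg hlim]
  norm_num [gpFisherXiPrimitive_zero hξ]
end

section
/- (Orthogonality of the GP reparametrisation with transformed scale parameter σ̃(ν,ξ) = C₃(ν)/(ξ+1).) For all σ > 0 and ξ > 0, ∫_0^∞ s_σ(x;σ,ξ) · ( −(σ/(1+ξ))·s_σ(x;σ,ξ) + s_ξ(x;σ,ξ) ) · f(x;σ,ξ) dx = 0. Equivalently, the Fisher cross-information between the new parameters ν and ξ vanishes, since the score in ν is proportional to s_σ and the score in ξ under the reparametrisation is (∂σ̃/∂ξ)·s_σ + s_ξ = −(σ̃/(1+ξ))·s_σ + s_ξ by the chain rule. -/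
/-!
Put `u = 1 + ξ x / σ`. Then `s_σ = (u - 1 - ξ) / (σ ξ u)` and
`s_ξ = (log u - (1 + ξ) (u - 1) / u) / ξ²`, so the integrand is `(σ² ξ³)⁻¹` times a sum of three
terms `u ^ (-p) (α + β log u)` with `p = 1 + 1/ξ, 2 + 1/ξ, 3 + 1/ξ`. Each integrates in closed form,
`∫₀^∞ (1 + b x) ^ (-p) (α + β log (1 + b x)) dx = (α + β / (p - 1)) / (b (p - 1))`, by the
fundamental theorem of calculus on `(0, ∞)` applied to `u ^ (-p)` and `u ^ (-p) log u` separately: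
these are nonnegative, so integrability comes for free. The three contributions cancel.
-/

open MeasureTheory Real

/-- Score of the GP distribution with respect to the scale parameter σ. -/
noncomputable def gpScoreSigma (σ ξ x : ℝ) : ℝ :=
  -1 / σ + (1 + ξ) * x / (σ * (σ + ξ * x))

open Filter Set Topology

lemma tendsto_rpow_one_sub_mul_log_atTop {p : ℝ} (hp : 1 < p) :
    Tendsto (fun u => u ^ (1 - p) * log u) atTop (𝓝 0) := by
  refine ((isLittleO_log_rpow_atTop (sub_pos.2 hp)).tendsto_div_nhds_zero).congr' ?_
  filter_upwards [eventually_gt_atTop 0] with u hu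
  rw [div_eq_mul_inv, ← rpow_neg hu.le, neg_sub, mul_comm]

section OneAddMulRpow

variable {b p : ℝ}

lemma hasDerivAt_one_add_mul_rpow (hb : 0 < b) {x : ℝ} (hx : 0 ≤ x) (q : ℝ) :
    HasDerivAt (fun x => (1 + b * x) ^ q) (b * q * (1 + b * x) ^ (q - 1)) x := by
  have hu : 0 < 1 + b * x := by positivity
  simpa using (((hasDerivAt_id x).const_mul b).const_add 1).rpow_const (p := q) (Or.inl hu.ne')

lemma hasDerivAt_log_one_add_mul (hb : 0 < b) {x : ℝ} (hx : 0 ≤ x) :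
    HasDerivAt (fun x => log (1 + b * x)) (b / (1 + b * x)) x := by
  have hu : 0 < 1 + b * x := by positivity
  simpa using (((hasDerivAt_id x).const_mul b).const_add 1).log hu.ne'

lemma tendsto_one_add_mul_atTop (hb : 0 < b) : Tendsto (fun x => 1 + b * x) atTop atTop :=
  tendsto_atTop_add_const_left _ 1 (tendsto_id.const_mul_atTop hb)

lemma one_add_mul_rpow_mul_log_nonneg (hb : 0 ≤ b) {x : ℝ} (hx : 0 ≤ x) (q : ℝ) :
    0 ≤ (1 + b * x) ^ q * log (1 + b * x) := by
  have hu : 1 ≤ 1 + b * x := le_add_of_nonneg_right (by positivity)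
  exact mul_nonneg (rpow_nonneg (by linarith) q) (log_nonneg hu)

variable (hb : 0 < b) (hp : 1 < p)
include hb hp

lemma hasDerivAt_antideriv_one_add_mul_rpow_neg {x : ℝ} (hx : 0 ≤ x) :
    HasDerivAt (fun x => -(1 + b * x) ^ (1 - p) / (b * (p - 1))) ((1 + b * x) ^ (-p)) x := by
  have hp' : p - 1 ≠ 0 := (sub_pos.2 hp).ne'
  refine (((hasDerivAt_one_add_mul_rpow hb hx (1 - p)).neg).div_const (b * (p - 1))).congr_deriv ?_
  rw [sub_sub_cancel_left]
  field_simp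
  ring

lemma hasDerivAt_antideriv_one_add_mul_rpow_neg_mul_log {x : ℝ} (hx : 0 ≤ x) :
    HasDerivAt (fun x => -((1 + b * x) ^ (1 - p) * (log (1 + b * x) + 1 / (p - 1))) / (b * (p - 1)))
      ((1 + b * x) ^ (-p) * log (1 + b * x)) x := by
  have hu : 0 < 1 + b * x := by positivity
  have hp' : p - 1 ≠ 0 := (sub_pos.2 hp).ne'
  refine ((((hasDerivAt_one_add_mul_rpow hb hx (1 - p)).mul
    ((hasDerivAt_log_one_add_mul hb hx).add_const (1 / (p - 1)))).neg).div_const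
      (b * (p - 1))).congr_deriv ?_
  rw [sub_sub_cancel_left, show 1 - p = -p + 1 by ring, rpow_add hu, rpow_one]
  field_simp
  ring

lemma tendsto_one_add_mul_rpow_one_sub_atTop :
    Tendsto (fun x => (1 + b * x) ^ (1 - p)) atTop (𝓝 0) := by
  rw [show 1 - p = -(p - 1) by ring]
  exact (tendsto_rpow_neg_atTop (sub_pos.2 hp)).comp (tendsto_one_add_mul_atTop hb)

lemma tendsto_antideriv_one_add_mul_rpow_neg :
    Tendsto (fun x => -(1 + b * x) ^ (1 - p) / (b * (p - 1))) atTop (𝓝 0) := by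
  simpa using ((tendsto_one_add_mul_rpow_one_sub_atTop hb hp).neg).div_const (b * (p - 1))

lemma tendsto_antideriv_one_add_mul_rpow_neg_mul_log :
    Tendsto (fun x => -((1 + b * x) ^ (1 - p) * (log (1 + b * x) + 1 / (p - 1))) / (b * (p - 1)))
      atTop (𝓝 0) := by
  have h := ((tendsto_rpow_one_sub_mul_log_atTop hp).comp (tendsto_one_add_mul_atTop hb)).add
    ((tendsto_one_add_mul_rpow_one_sub_atTop hb hp).mul_const (1 / (p - 1)))
  simpa [mul_add] using (h.neg).div_const (b * (p - 1))

lemma integrableOn_one_add_mul_rpow_neg :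
    IntegrableOn (fun x => (1 + b * x) ^ (-p)) (Ioi 0) :=
  integrableOn_Ioi_deriv_of_nonneg' (fun _ hx => hasDerivAt_antideriv_one_add_mul_rpow_neg hb hp hx)
    (fun x (hx : 0 < x) => by positivity) (tendsto_antideriv_one_add_mul_rpow_neg hb hp)

lemma integral_one_add_mul_rpow_neg :
    ∫ x in Ioi 0, (1 + b * x) ^ (-p) = 1 / (b * (p - 1)) := by
  rw [integral_Ioi_of_hasDerivAt_of_nonneg'
    (fun _ hx => hasDerivAt_antideriv_one_add_mul_rpow_neg hb hp hx)
    (fun x (hx : 0 < x) => by positivity) (tendsto_antideriv_one_add_mul_rpow_neg hb hp)]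
  simp [neg_div]

lemma integrableOn_one_add_mul_rpow_neg_mul_log :
    IntegrableOn (fun x => (1 + b * x) ^ (-p) * log (1 + b * x)) (Ioi 0) :=
  integrableOn_Ioi_deriv_of_nonneg'
    (fun _ hx => hasDerivAt_antideriv_one_add_mul_rpow_neg_mul_log hb hp hx)
    (fun _ hx => one_add_mul_rpow_mul_log_nonneg hb.le (le_of_lt hx) _)
    (tendsto_antideriv_one_add_mul_rpow_neg_mul_log hb hp)

lemma integral_one_add_mul_rpow_neg_mul_log :
    ∫ x in Ioi 0, (1 + b * x) ^ (-p) * log (1 + b * x) = 1 / (b * (p - 1) ^ 2) := by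
  rw [integral_Ioi_of_hasDerivAt_of_nonneg'
    (fun _ hx => hasDerivAt_antideriv_one_add_mul_rpow_neg_mul_log hb hp hx)
    (fun _ hx => one_add_mul_rpow_mul_log_nonneg hb.le (le_of_lt hx) _)
    (tendsto_antideriv_one_add_mul_rpow_neg_mul_log hb hp)]
  simp only [mul_zero, add_zero, one_rpow, log_one, zero_add, one_mul]
  field_simp
  ring

variable (α β : ℝ)

lemma integrableOn_one_add_mul_rpow_neg_mul_affine_log :
    IntegrableOn (fun x => (1 + b * x) ^ (-p) * (α + β * log (1 + b * x))) (Ioi 0) := by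
  simp_rw [mul_add, mul_left_comm _ β, mul_comm _ α]
  exact ((integrableOn_one_add_mul_rpow_neg hb hp).const_mul α).add
    ((integrableOn_one_add_mul_rpow_neg_mul_log hb hp).const_mul β)

lemma integral_one_add_mul_rpow_neg_mul_affine_log :
    ∫ x in Ioi 0, (1 + b * x) ^ (-p) * (α + β * log (1 + b * x)) =
      (α + β / (p - 1)) / (b * (p - 1)) := by
  simp_rw [mul_add, mul_left_comm _ β, mul_comm _ α]
  rw [integral_add ((integrableOn_one_add_mul_rpow_neg hb hp).const_mul α)
    ((integrableOn_one_add_mul_rpow_neg_mul_log hb hp).const_mul β),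
    integral_const_mul, integral_const_mul, integral_one_add_mul_rpow_neg hb hp,
    integral_one_add_mul_rpow_neg_mul_log hb hp]
  have : p - 1 ≠ 0 := (sub_pos.2 hp).ne'
  field_simp

end OneAddMulRpow

lemma gp_orthogonality_integrand_eq {σ ξ : ℝ} (hσ : 0 < σ) (hξ : 0 < ξ) {x : ℝ} (hx : 0 ≤ x) :
    gpScoreSigma σ ξ x * (-(σ / (1 + ξ)) * gpScoreSigma σ ξ x + gpScoreXi σ ξ x) *
        gpPdf σ ξ x =
      1 / (σ ^ 2 * ξ ^ 3) *
        ((1 + ξ / σ * x) ^ (-(1 + 1 / ξ)) *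
            (-(1 + ξ) - ξ / (1 + ξ) + 1 * log (1 + ξ / σ * x)) +
          (1 + ξ / σ * x) ^ (-(2 + 1 / ξ)) *
            ((2 + 5 * ξ + ξ ^ 2) + -(1 + ξ) * log (1 + ξ / σ * x)) +
          (1 + ξ / σ * x) ^ (-(3 + 1 / ξ)) *
            (-((1 + ξ) * (1 + 2 * ξ)) + 0 * log (1 + ξ / σ * x))) := by
  have hu : 0 < 1 + ξ / σ * x := by positivity
  have hσx : 0 < σ + ξ * x := by positivity
  rw [show -(2 + 1 / ξ) = (-1 - 1 / ξ) + (-1) by ring,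
    show -(3 + 1 / ξ) = (-1 - 1 / ξ) + (-2) by ring, show -(1 + 1 / ξ) = -1 - 1 / ξ by ring,
    rpow_add hu, rpow_add hu, rpow_neg_one, rpow_neg hu.le, rpow_two]
  simp only [gpScoreSigma, gpScoreXi, gpPdf, div_mul_eq_mul_div ξ σ x]
  generalize log (1 + ξ * x / σ) = L
  generalize (1 + ξ * x / σ) ^ (-1 - 1 / ξ) = A
  field_simp
  ring

theorem gp_orthogonal_scale_reparam (σ ξ : ℝ) (hσ : 0 < σ) (hξ : 0 < ξ) :
    ∫ x in Set.Ioi (0 : ℝ),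
        gpScoreSigma σ ξ x *
          (-(σ / (1 + ξ)) * gpScoreSigma σ ξ x + gpScoreXi σ ξ x) * gpPdf σ ξ x = 0 := by
  have hb : 0 < ξ / σ := div_pos hξ hσ
  have hp₁ : 1 < 1 + 1 / ξ := by simp [hξ]
  have hp₂ : 1 < 2 + 1 / ξ := by linarith
  have hp₃ : 1 < 3 + 1 / ξ := by linarith
  have hI₁ := integrableOn_one_add_mul_rpow_neg_mul_affine_log hb hp₁
    (-(1 + ξ) - ξ / (1 + ξ)) 1
  have hI₂ := integrableOn_one_add_mul_rpow_neg_mul_affine_log hb hp₂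
    (2 + 5 * ξ + ξ ^ 2) (-(1 + ξ))
  have hI₃ := integrableOn_one_add_mul_rpow_neg_mul_affine_log hb hp₃
    (-((1 + ξ) * (1 + 2 * ξ))) 0
  rw [setIntegral_congr_fun measurableSet_Ioi
      (fun x hx => gp_orthogonality_integrand_eq hσ hξ (le_of_lt hx)),
    integral_const_mul, integral_add ?_ hI₃, integral_add hI₁ hI₂,
    integral_one_add_mul_rpow_neg_mul_affine_log hb hp₁,
    integral_one_add_mul_rpow_neg_mul_affine_log hb hp₂,
    integral_one_add_mul_rpow_neg_mul_affine_log hb hp₃]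
  · rw [show 1 + 1 / ξ - 1 = 1 / ξ by ring,
      show 2 + 1 / ξ - 1 = (1 + ξ) / ξ by field_simp; ring,
      show 3 + 1 / ξ - 1 = (1 + 2 * ξ) / ξ by field_simp; ring]
    have : 0 < 1 + ξ := by positivity
    have : 0 < 1 + 2 * ξ := by positivity
    field_simp
    ring
  · exact hI₁.add hI₂
end

section
/- (Orthogonality of the GP reparametrisation with transformed shape parameter ξ̃(σ,ζ) = C₄(ζ) − log(σ)/2.) For all σ > 0 and ξ > 0, ∫_0^∞ s_ξ(x;σ,ξ) · ( s_σ(x;σ,ξ) − (1/(2σ))·s_ξ(x;σ,ξ) ) · f(x;σ,ξ) dx = 0. Equivalently, the Fisher cross-information between the new parameters σ and ζ vanishes, since the score in ζ is proportional to s_ξ and the score in σ under the reparametrisation is s_σ + (∂ξ̃/∂σ)·s_ξ = s_σ − (1/(2σ))·s_ξ by the chain rule. -/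
/-!
If `T` is standard exponential then `σ / ξ * (exp (ξ * T) - 1)` is GP(σ, ξ)-distributed. Under this
substitution `log (1 + ξ x / σ) = ξ t`, so both scores become polynomials in `t` and `exp (-(ξ t))`,
and the integral turns into a finite combination of the Gamma integrals
`∫ t^n exp (-(r t)) dt = n! / r^(n+1)` over `(0, ∞)`, which cancel.
-/

open MeasureTheory Real

open Set
open scoped Nat

theorem integrableOn_pow_mul_exp_neg_mul_Ioi (n : ℕ) {r : ℝ} (hr : 0 < r) :
    IntegrableOn (fun t : ℝ => t ^ n * exp (-(r * t))) (Ioi 0) := by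
  refine (integrableOn_rpow_mul_exp_neg_mul_rpow (s := n) (p := 1)
    (neg_one_lt_zero.trans_le n.cast_nonneg) one_pos hr).congr_fun (fun t _ => ?_) measurableSet_Ioi
  simp [neg_mul]

theorem integral_pow_mul_exp_neg_mul_Ioi (n : ℕ) {r : ℝ} (hr : 0 < r) :
    ∫ t in Ioi 0, t ^ n * exp (-(r * t)) = n ! / r ^ (n + 1) := by
  have h := integral_rpow_mul_exp_neg_mul_Ioi (a := n + 1) (by positivity) hr
  simp only [add_sub_cancel_right, rpow_natCast, Gamma_nat_eq_factorial] at h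
  rw [h, ← rpow_natCast, Nat.cast_add_one, one_div, inv_rpow hr.le]
  ring

theorem integral_sum_mul_pow_mul_exp_neg_mul_Ioi {ι : Type*} (s : Finset ι) (c r : ι → ℝ)
    (n : ι → ℕ) (hr : ∀ i ∈ s, 0 < r i) :
    ∫ t in Ioi 0, ∑ i ∈ s, c i * (t ^ n i * exp (-(r i * t))) =
      ∑ i ∈ s, c i * (n i)! / r i ^ (n i + 1) := by
  rw [integral_finsetSum s fun i hi =>
    (integrableOn_pow_mul_exp_neg_mul_Ioi _ (hr i hi)).const_mul _]
  refine Finset.sum_congr rfl fun i hi => ?_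
  rw [integral_const_mul, integral_pow_mul_exp_neg_mul_Ioi _ (hr i hi), mul_div_assoc]

noncomputable def gpOfStdExp (σ ξ t : ℝ) : ℝ := σ / ξ * (exp (ξ * t) - 1)

section

variable {σ ξ : ℝ}

theorem one_add_mul_gpOfStdExp_div (hσ : σ ≠ 0) (hξ : ξ ≠ 0) (t : ℝ) :
    1 + ξ * gpOfStdExp σ ξ t / σ = exp (ξ * t) := by
  unfold gpOfStdExp; field_simp; ring

theorem strictMono_gpOfStdExp (hσ : 0 < σ) (hξ : 0 < ξ) : StrictMono (gpOfStdExp σ ξ) :=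
  fun _ _ h => mul_lt_mul_of_pos_left
    (sub_lt_sub_right (exp_lt_exp.2 (mul_lt_mul_of_pos_left h hξ)) 1) (div_pos hσ hξ)

theorem image_gpOfStdExp_Ioi (hσ : 0 < σ) (hξ : 0 < ξ) : gpOfStdExp σ ξ '' Ioi 0 = Ioi 0 := by
  ext x
  constructor
  · rintro ⟨t, ht, rfl⟩
    simpa [gpOfStdExp] using strictMono_gpOfStdExp hσ hξ ht
  · intro (hx : 0 < x)
    have hu : 1 < 1 + ξ * x / σ := lt_add_of_pos_right 1 (by positivity)
    refine ⟨log (1 + ξ * x / σ) / ξ, div_pos (log_pos hu) hξ, ?_⟩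
    rw [gpOfStdExp, mul_div_cancel₀ _ hξ.ne', exp_log (one_pos.trans hu)]
    field_simp; ring

theorem hasDerivAt_gpOfStdExp (hξ : ξ ≠ 0) (t : ℝ) :
    HasDerivAt (gpOfStdExp σ ξ) (σ * exp (ξ * t)) t := by
  have h := (((hasDerivAt_id t).const_mul ξ).exp.sub_const 1).const_mul (σ / ξ)
  simp only [id, mul_one] at h
  exact h.congr_deriv (by field_simp)

theorem setIntegral_mul_gpPdf_eq (hσ : 0 < σ) (hξ : 0 < ξ) (g : ℝ → ℝ) :
    ∫ x in Ioi 0, g x * gpPdf σ ξ x = ∫ t in Ioi 0, g (gpOfStdExp σ ξ t) * exp (-t) := by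
  have h := integral_image_eq_integral_abs_deriv_smul (measurableSet_Ioi (a := 0))
    (fun t _ => (hasDerivAt_gpOfStdExp hξ.ne' t).hasDerivWithinAt)
    (strictMono_gpOfStdExp hσ hξ).injective.injOn (fun x => g x * gpPdf σ ξ x)
  rw [image_gpOfStdExp_Ioi hσ hξ] at h
  rw [h]
  refine setIntegral_congr_fun measurableSet_Ioi fun t _ => ?_
  have hpow : exp (ξ * t) ^ (-1 - 1 / ξ) = exp (-t) * exp (-(ξ * t)) := by
    rw [← exp_mul, ← exp_add]; congr 1; field_simp; ring
  rw [gpPdf, one_add_mul_gpOfStdExp_div hσ.ne' hξ.ne', hpow, exp_neg (ξ * t),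
    abs_of_pos (mul_pos hσ (exp_pos _)), smul_eq_mul]
  field_simp

theorem gpScoreSigma_gpOfStdExp (hσ : σ ≠ 0) (hξ : ξ ≠ 0) (t : ℝ) :
    gpScoreSigma σ ξ (gpOfStdExp σ ξ t) = (1 - (1 + ξ) * exp (-(ξ * t))) / (σ * ξ) := by
  rw [gpScoreSigma, exp_neg, gpOfStdExp]
  have := exp_pos (ξ * t)
  field_simp
  ring

theorem gpScoreXi_gpOfStdExp (hσ : σ ≠ 0) (hξ : ξ ≠ 0) (t : ℝ) :
    gpScoreXi σ ξ (gpOfStdExp σ ξ t) = (ξ * t - (1 + ξ) * (1 - exp (-(ξ * t)))) / ξ ^ 2 := by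
  rw [gpScoreXi, one_add_mul_gpOfStdExp_div hσ hξ, log_exp, exp_neg, gpOfStdExp]
  have := exp_pos (ξ * t)
  field_simp
  ring

end

theorem gp_orthogonal_shape_reparam (σ ξ : ℝ) (hσ : 0 < σ) (hξ : 0 < ξ) :
    ∫ x in Set.Ioi (0 : ℝ),
        gpScoreXi σ ξ x *
          (gpScoreSigma σ ξ x - (1 / (2 * σ)) * gpScoreXi σ ξ x) * gpPdf σ ξ x = 0 := by
  rw [setIntegral_mul_gpPdf_eq hσ hξ (fun x => gpScoreXi σ ξ x *
    (gpScoreSigma σ ξ x - (1 / (2 * σ)) * gpScoreXi σ ξ x))]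
  simp only [gpScoreSigma_gpOfStdExp hσ.ne' hξ.ne', gpScoreXi_gpOfStdExp hσ.ne' hξ.ne']
  calc _ = ∫ t in Ioi 0, ∑ i : Fin 6, (2 * σ * ξ ^ 4)⁻¹ *
          ![-ξ ^ 2, (2 + 4 * ξ) * ξ, -2 * (1 + ξ) ^ 2 * ξ, -(1 + ξ) * (1 + 3 * ξ),
            (1 + ξ) * (2 + 6 * ξ + 2 * ξ ^ 2), -(1 + ξ) ^ 2 * (1 + 2 * ξ)] i *
          (t ^ ![2, 1, 1, 0, 0, 0] i * exp (-(![1, 1, 1 + ξ, 1, 1 + ξ, 1 + 2 * ξ] i * t))) := by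
        congr 1; funext t
        have e1 : exp (-((1 + ξ) * t)) = exp (-t) * exp (-(ξ * t)) := by
          rw [← exp_add]; ring_nf
        have e2 : exp (-((1 + 2 * ξ) * t)) = exp (-t) * exp (-(ξ * t)) ^ 2 := by
          rw [← exp_nat_mul, ← exp_add]; ring_nf
        simp only [Fin.sum_univ_succ, Fin.sum_univ_zero, Matrix.cons_val_zero, Matrix.cons_val_succ,
          e1, e2]
        field_simp
        ring
    _ = 0 := by
      rw [integral_sum_mul_pow_mul_exp_neg_mul_Ioi]
      · simp only [Fin.sum_univ_succ, Fin.sum_univ_zero, Matrix.cons_val_zero,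
          Matrix.cons_val_succ]
        field_simp
        ring
      · intro i _
        fin_cases i <;> simp <;> positivity
end

section
/- (Orthogonality of the three-parameter GP reparametrisation (μ,ν,ξ) ↦ (μ, ν/(ξ+1), ξ).) For all μ ∈ ℝ, σ > 0 and ξ > 0, both of the following hold: ∫_μ^∞ s_μ(x;μ,σ,ξ) · ( s_ξ(x;μ,σ,ξ) − (σ/(1+ξ))·s_σ(x;μ,σ,ξ) ) · f(x;μ,σ,ξ) dx = 0 and ∫_μ^∞ s_σ(x;μ,σ,ξ) · ( s_ξ(x;μ,σ,ξ) − (σ/(1+ξ))·s_σ(x;μ,σ,ξ) ) · f(x;μ,σ,ξ) dx = 0. Equivalently, after the reparametrisation with transformed scale σ̃ = ν/(ξ+1), whose score in ξ is s_ξ + (∂σ̃/∂ξ)·s_σ = s_ξ − (σ̃/(1+ξ))·s_σ by the chain rule, the Fisher cross-information between ξ and μ and between ξ and ν is zero. -/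
open MeasureTheory Real

/-- Density of the three-parameter Generalised Pareto distribution GP(μ,σ,ξ), for x > μ. -/
noncomputable def gp3Pdf (μ σ ξ x : ℝ) : ℝ :=
  (1 / σ) * (1 + ξ * (x - μ) / σ) ^ (-1 - 1 / ξ)

/-- Score of the three-parameter GP distribution with respect to the location parameter μ. -/
noncomputable def gp3ScoreMu (μ σ ξ x : ℝ) : ℝ :=
  (1 + ξ) / (σ + ξ * (x - μ))

/-- Score of the three-parameter GP distribution with respect to the scale parameter σ. -/
noncomputable def gp3ScoreSigma (μ σ ξ x : ℝ) : ℝ :=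
  -1 / σ + (1 + ξ) * (x - μ) / (σ * (σ + ξ * (x - μ)))

/-- Score of the three-parameter GP distribution with respect to the shape parameter ξ. -/
noncomputable def gp3ScoreXi (μ σ ξ x : ℝ) : ℝ :=
  (1 / ξ ^ 2) * Real.log (1 + ξ * (x - μ) / σ) - (1 + 1 / ξ) * (x - μ) / (σ + ξ * (x - μ))

/-!
In the standardised variable `w = 1 + ξ (x - μ) / σ`, which runs over `(1, ∞)`, the density is
`w ^ (-1 - 1/ξ) / σ`, the scores `s_μ`, `s_σ` are rational in `w`, and the orthogonalised score
`s_ξ - σ/(1+ξ) s_σ` is affine in `log w` and `1/w`. So after the affine substitution both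
cross-information integrands are combinations of `(α log w + β) w^(-a)`, whose integral over
`(1, ∞)` is `α/(a-1)² + β/(a-1)` by an explicit antiderivative, and these combinations cancel.
-/

open Filter Topology Set

noncomputable def logRpow (α β a w : ℝ) : ℝ := (α * log w + β) * w ^ (-a)

noncomputable def logRpowAntideriv (α β a w : ℝ) : ℝ :=
  -(α * log w + α / (a - 1) + β) * w ^ (1 - a) / (a - 1)

section LogRpowMoments

variable {a : ℝ}

theorem hasDerivAt_logRpow_antideriv (α β : ℝ) (ha : a ≠ 1) {w : ℝ} (hw : 0 < w) :
    HasDerivAt (logRpowAntideriv α β a) (logRpow α β a w) w := by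
  have ha' : a - 1 ≠ 0 := sub_ne_zero.mpr ha
  have hpow : HasDerivAt (fun w => w ^ (1 - a)) ((1 - a) * w ^ (-a)) w := by
    simpa using hasDerivAt_rpow_const (p := 1 - a) (Or.inl hw.ne')
  have hlog : HasDerivAt (fun w => α * log w + α / (a - 1) + β) (α * w⁻¹) w :=
    (((hasDerivAt_log hw.ne').const_mul α).add_const _).add_const _
  refine ((hlog.neg.mul hpow).div_const (a - 1)).congr_deriv ?_
  rw [logRpow, sub_eq_add_neg 1 a, rpow_add hw, rpow_one, Pi.neg_apply]
  field_simp
  ring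

theorem tendsto_logRpow_antideriv_atTop (α β : ℝ) (ha : 1 < a) :
    Tendsto (logRpowAntideriv α β a) atTop (𝓝 0) := by
  have hpos : 0 < a - 1 := sub_pos.mpr ha
  have hpow : Tendsto (fun w : ℝ => w ^ (1 - a)) atTop (𝓝 0) := by
    simpa using tendsto_rpow_neg_atTop hpos
  have hlog : Tendsto (fun w : ℝ => log w * w ^ (1 - a)) atTop (𝓝 0) := by
    refine (isLittleO_log_rpow_atTop hpos).tendsto_div_nhds_zero.congr' ?_
    filter_upwards [eventually_gt_atTop 0] with w hw
    rw [show 1 - a = -(a - 1) by ring, rpow_neg hw.le, div_eq_mul_inv]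
  have := ((hlog.const_mul α).add (hpow.const_mul (α / (a - 1) + β))).neg.div_const (a - 1)
  simp only [mul_zero, add_zero, neg_zero, zero_div] at this
  refine this.congr fun w => ?_
  rw [logRpowAntideriv]
  ring

theorem integrableOn_Ioi_one_logRpow (α β : ℝ) (ha : 1 < a) :
    IntegrableOn (logRpow α β a) (Ioi 1) := by
  have hlog : IntegrableOn (logRpow 1 0 a) (Ioi 1) :=
    integrableOn_Ioi_deriv_of_nonneg'
      (fun w hw => hasDerivAt_logRpow_antideriv 1 0 ha.ne' (zero_lt_one.trans_le hw))
      (fun w hw => by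
        simpa [logRpow] using
          mul_nonneg (log_nonneg (le_of_lt hw)) (rpow_nonneg (by linarith [hw.out]) (-a)))
      (tendsto_logRpow_antideriv_atTop 1 0 ha)
  have hpow : IntegrableOn (fun w : ℝ => w ^ (-a)) (Ioi 1) :=
    integrableOn_Ioi_rpow_of_lt (by linarith) zero_lt_one
  refine IntegrableOn.congr_fun ((hlog.const_mul α).add (hpow.const_mul β)) (fun w _ => ?_)
    measurableSet_Ioi
  simp only [Pi.add_apply, logRpow]
  ring

theorem integral_Ioi_one_logRpow (α β : ℝ) (ha : 1 < a) :
    ∫ w in Ioi 1, logRpow α β a w = α / (a - 1) ^ 2 + β / (a - 1) := by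
  rw [integral_Ioi_of_hasDerivAt_of_tendsto'
    (fun w hw => hasDerivAt_logRpow_antideriv α β ha.ne' (zero_lt_one.trans_le hw))
    (integrableOn_Ioi_one_logRpow α β ha) (tendsto_logRpow_antideriv_atTop α β ha)]
  have : a - 1 ≠ 0 := sub_ne_zero.mpr ha.ne'
  simp only [logRpowAntideriv, log_one, mul_zero, zero_add, one_rpow]
  field_simp
  ring

end LogRpowMoments

theorem integral_Ioi_comp_one_add_mul_sub {E : Type*} [NormedAddCommGroup E] [NormedSpace ℝ E]
    (g : ℝ → E) (μ : ℝ) {b : ℝ} (hb : 0 < b) :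
    ∫ x in Ioi μ, g (1 + b * (x - μ)) = b⁻¹ • ∫ w in Ioi 1, g w := by
  have himage : (fun x => 1 + b * (x - μ)) '' Ioi μ = Ioi 1 := by
    ext w
    constructor
    · rintro ⟨x, hx, rfl⟩
      have : 0 < b * (x - μ) := mul_pos hb (sub_pos.mpr hx)
      simp only [mem_Ioi]
      linarith
    · intro hw
      refine ⟨μ + (w - 1) / b, ?_, by field_simp; ring⟩
      have : 0 < (w - 1) / b := div_pos (sub_pos.mpr hw) hb
      simp only [mem_Ioi]
      linarith
  have hderiv : ∀ x ∈ Ioi μ, HasDerivWithinAt (fun x => 1 + b * (x - μ)) b (Ioi μ) x :=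
    fun x _ => by
      simpa using ((((hasDerivAt_id x).sub_const μ).const_mul b).const_add 1).hasDerivWithinAt
  have hinj : InjOn (fun x => 1 + b * (x - μ)) (Ioi μ) :=
    fun x _ y _ h => by simpa [hb.ne'] using h
  rw [← himage, integral_image_eq_integral_abs_deriv_smul measurableSet_Ioi hderiv hinj,
    integral_smul, abs_of_pos hb, smul_smul, inv_mul_cancel₀ hb.ne', one_smul]

/- The two cross-information integrands in the variable `w = 1 + ξ (x - μ) / σ`, where
`s_ξ - σ/(1+ξ) s_σ = (log w - 1 - ξ - ξ/(1+ξ) + (1+2ξ)/w) / ξ²`. -/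
noncomputable def muCrossIntegrand (σ ξ w : ℝ) : ℝ :=
  (1 + ξ) / (σ ^ 2 * ξ ^ 2) *
    (logRpow 1 (-(1 + ξ + ξ / (1 + ξ))) (2 + 1 / ξ) w + logRpow 0 (1 + 2 * ξ) (3 + 1 / ξ) w)

noncomputable def sigmaCrossIntegrand (σ ξ w : ℝ) : ℝ :=
  1 / (σ ^ 2 * ξ ^ 3) *
    (logRpow 1 (-(1 + ξ + ξ / (1 + ξ))) (1 + 1 / ξ) w
      + logRpow (-(1 + ξ)) (ξ ^ 2 + 5 * ξ + 2) (2 + 1 / ξ) w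
      + logRpow 0 (-((1 + ξ) * (1 + 2 * ξ))) (3 + 1 / ξ) w)

section

variable {μ σ ξ x : ℝ}

theorem gp3ScoreMu_cross_eq_muCrossIntegrand (hσ : 0 < σ) (hξ : 0 < ξ) (hx : μ < x) :
    gp3ScoreMu μ σ ξ x * (gp3ScoreXi μ σ ξ x - σ / (1 + ξ) * gp3ScoreSigma μ σ ξ x)
      * gp3Pdf μ σ ξ x = muCrossIntegrand σ ξ (1 + ξ / σ * (x - μ)) := by
  have hxμ : 0 < ξ * (x - μ) := mul_pos hξ (sub_pos.mpr hx)
  have hW : 0 < 1 + ξ * (x - μ) / σ := by positivity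
  have hσW : σ + ξ * (x - μ) ≠ 0 := by positivity
  simp only [gp3ScoreMu, gp3ScoreXi, gp3ScoreSigma, gp3Pdf, muCrossIntegrand, logRpow,
    show ξ / σ * (x - μ) = ξ * (x - μ) / σ by ring,
    show -(2 + 1 / ξ) = (-1 - 1 / ξ) - (1 : ℕ) by push_cast; ring,
    show -(3 + 1 / ξ) = (-1 - 1 / ξ) - (2 : ℕ) by push_cast; ring, rpow_sub_natCast hW.ne']
  generalize log (1 + ξ * (x - μ) / σ) = L
  generalize (1 + ξ * (x - μ) / σ) ^ (-1 - 1 / ξ) = t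
  field_simp
  ring

theorem gp3ScoreSigma_cross_eq_sigmaCrossIntegrand (hσ : 0 < σ) (hξ : 0 < ξ) (hx : μ < x) :
    gp3ScoreSigma μ σ ξ x * (gp3ScoreXi μ σ ξ x - σ / (1 + ξ) * gp3ScoreSigma μ σ ξ x)
      * gp3Pdf μ σ ξ x = sigmaCrossIntegrand σ ξ (1 + ξ / σ * (x - μ)) := by
  have hxμ : 0 < ξ * (x - μ) := mul_pos hξ (sub_pos.mpr hx)
  have hW : 0 < 1 + ξ * (x - μ) / σ := by positivity
  have hσW : σ + ξ * (x - μ) ≠ 0 := by positivity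
  simp only [gp3ScoreXi, gp3ScoreSigma, gp3Pdf, sigmaCrossIntegrand, logRpow,
    show ξ / σ * (x - μ) = ξ * (x - μ) / σ by ring,
    show -(1 + 1 / ξ) = -1 - 1 / ξ by ring,
    show -(2 + 1 / ξ) = (-1 - 1 / ξ) - (1 : ℕ) by push_cast; ring,
    show -(3 + 1 / ξ) = (-1 - 1 / ξ) - (2 : ℕ) by push_cast; ring, rpow_sub_natCast hW.ne']
  generalize log (1 + ξ * (x - μ) / σ) = L
  generalize (1 + ξ * (x - μ) / σ) ^ (-1 - 1 / ξ) = t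
  field_simp
  ring

end

section

variable {ξ : ℝ}

theorem integral_Ioi_one_muCrossIntegrand (σ : ℝ) (hξ : 0 < ξ) :
    ∫ w in Ioi 1, muCrossIntegrand σ ξ w = 0 := by
  have h2 : 1 < 2 + 1 / ξ := by have := one_div_pos.mpr hξ; linarith
  have h3 : 1 < 3 + 1 / ξ := by linarith
  have : 1 + ξ ≠ 0 := by positivity
  have : 1 + 2 * ξ ≠ 0 := by positivity
  simp only [muCrossIntegrand]
  rw [integral_const_mul]
  refine mul_eq_zero_of_right _ ?_
  rw [integral_add (integrableOn_Ioi_one_logRpow _ _ h2)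
    (integrableOn_Ioi_one_logRpow _ _ h3), integral_Ioi_one_logRpow _ _ h2,
    integral_Ioi_one_logRpow _ _ h3, show 2 + 1 / ξ - 1 = (1 + ξ) / ξ by field_simp; ring,
    show 3 + 1 / ξ - 1 = (1 + 2 * ξ) / ξ by field_simp; ring]
  field_simp
  ring

theorem integral_Ioi_one_sigmaCrossIntegrand (σ : ℝ) (hξ : 0 < ξ) :
    ∫ w in Ioi 1, sigmaCrossIntegrand σ ξ w = 0 := by
  have h1 : 1 < 1 + 1 / ξ := by have := one_div_pos.mpr hξ; linarith
  have h2 : 1 < 2 + 1 / ξ := by linarith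
  have h3 : 1 < 3 + 1 / ξ := by linarith
  have : 1 + ξ ≠ 0 := by positivity
  have : 1 + 2 * ξ ≠ 0 := by positivity
  simp only [sigmaCrossIntegrand]
  rw [integral_const_mul]
  refine mul_eq_zero_of_right _ ?_
  rw [integral_add ?_ (integrableOn_Ioi_one_logRpow _ _ h3),
    integral_add (integrableOn_Ioi_one_logRpow _ _ h1) (integrableOn_Ioi_one_logRpow _ _ h2),
    integral_Ioi_one_logRpow _ _ h1, integral_Ioi_one_logRpow _ _ h2,
    integral_Ioi_one_logRpow _ _ h3, show 1 + 1 / ξ - 1 = 1 / ξ by ring,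
    show 2 + 1 / ξ - 1 = (1 + ξ) / ξ by field_simp; ring,
    show 3 + 1 / ξ - 1 = (1 + 2 * ξ) / ξ by field_simp; ring]
  · field_simp
    ring
  · exact (integrableOn_Ioi_one_logRpow _ _ h1).add (integrableOn_Ioi_one_logRpow _ _ h2)

end

theorem gp3_orthogonal_reparam (μ σ ξ : ℝ) (hσ : 0 < σ) (hξ : 0 < ξ) :
    (∫ x in Set.Ioi μ,
        gp3ScoreMu μ σ ξ x *
          (gp3ScoreXi μ σ ξ x - (σ / (1 + ξ)) * gp3ScoreSigma μ σ ξ x) * gp3Pdf μ σ ξ x = 0)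
    ∧ (∫ x in Set.Ioi μ,
        gp3ScoreSigma μ σ ξ x *
          (gp3ScoreXi μ σ ξ x - (σ / (1 + ξ)) * gp3ScoreSigma μ σ ξ x) * gp3Pdf μ σ ξ x = 0) := by
  have hb : 0 < ξ / σ := div_pos hξ hσ
  constructor
  · rw [setIntegral_congr_fun measurableSet_Ioi
        fun x hx => gp3ScoreMu_cross_eq_muCrossIntegrand hσ hξ hx,
      integral_Ioi_comp_one_add_mul_sub _ μ hb, integral_Ioi_one_muCrossIntegrand σ hξ,
      smul_zero]
  · rw [setIntegral_congr_fun measurableSet_Ioi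
        fun x hx => gp3ScoreSigma_cross_eq_sigmaCrossIntegrand hσ hξ hx,
      integral_Ioi_comp_one_add_mul_sub _ μ hb, integral_Ioi_one_sigmaCrossIntegrand σ hξ,
      smul_zero]
end
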